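/- Let A be a finite nonempty alphabet, E ⊆ W(A), and 𝐬 = (s_n(x))_{n=0}^∞ an infinite sequence of variable words over A such that E is large in 𝐬. Then there exists n_0 ∈ ℕ such that for every word z ∈ ⟨(s_i(x))_{i=n_0+1}^∞⟩_c there exists a variable word w(x) ∈ ⟨(s_i(x))_{i=0}^{n_0}⟩_v with {w(a)z : a ∈ A} ⊆ E (where w(a)z denotes concatenation). -/

import Mathlib

/- Words over an alphabet are `List α`.  The variable symbol `x` is modelled by
`none : Option α`, and variable words are lists over `Option α` containing `none`. -/

namespace HJ

variable {α : Type*}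

/-- Substitution of the letter `a` for every occurrence of the variable in a
variable word, producing a constant word. -/
def substC (s : List (Option α)) (a : α) : List α :=
  s.map (fun b => b.getD a)

/-- Substitution of `b ∈ A ∪ {x}` (a letter `some a` or the variable `none`)
for every occurrence of the variable. -/
def substV (s : List (Option α)) (b : Option α) : List (Option α) :=
  s.map (fun c => Option.elim c b some)

/-- `s` is a variable word over the alphabet `S`: all its letters lie in `S`
and it contains at least one occurrence of the variable. -/
def IsVarWord (S : Set α) (s : List (Option α)) : Prop :=
  (∀ a : α, some a ∈ s → a ∈ S) ∧ none ∈ s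

/-- `W(S)`: the set of (constant) words over the alphabet `S`. -/
def WordsOver (S : Set α) : Set (List α) :=
  { w | ∀ a ∈ w, a ∈ S }

/-- The constant span of the sequence `s` of variable words, with indices
restricted to `I` and the letter substituted at position `l i` taken from the
alphabet `B (l i)`: all concatenations `s_{l_0}(a_0) ⋯ s_{l_n}(a_n)` with
`l_0 < ⋯ < l_n` in `I` and `a_i ∈ B (l_i)`. -/
def constSpan (B : ℕ → Set α) (s : ℕ → List (Option α)) (I : Set ℕ) :
    Set (List α) :=
  { w | ∃ (n : ℕ) (l : Fin (n + 1) → ℕ) (a : Fin (n + 1) → α),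
      StrictMono l ∧ (∀ i, l i ∈ I) ∧ (∀ i, a i ∈ B (l i)) ∧
      w = (List.ofFn fun i => substC (s (l i)) (a i)).flatten }

/-- The variable span of the sequence `s` of variable words, with indices
restricted to `I` and alphabets given by `B`: all concatenations
`s_{l_0}(b_0) ⋯ s_{l_n}(b_n)` with `l_0 < ⋯ < l_n` in `I` and
`b_i ∈ B (l_i) ∪ {x}` which contain at least one occurrence of the variable. -/
def varSpan (B : ℕ → Set α) (s : ℕ → List (Option α)) (I : Set ℕ) :
    Set (List (Option α)) :=
  { w | ∃ (n : ℕ) (l : Fin (n + 1) → ℕ) (b : Fin (n + 1) → Option α),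
      StrictMono l ∧ (∀ i, l i ∈ I) ∧
      (∀ i, ∀ a : α, b i = some a → a ∈ B (l i)) ∧
      none ∈ w ∧
      w = (List.ofFn fun i => substV (s (l i)) (b i)).flatten }

/-- `(t_0, …, t_l)` is a finite extracted subsequence of `s` (with alphabets `B`):
there are `0 = m_0 < m_1 < ⋯` with `t_i` in the variable span of
`(s_n)_{n = m_i}^{m_{i+1} - 1}` (with alphabets `B`) for all `i ≤ l`. -/
def ExtractedFin (B : ℕ → Set α) (s t : ℕ → List (Option α)) (l : ℕ) : Prop :=
  ∃ m : ℕ → ℕ, m 0 = 0 ∧ StrictMono m ∧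
    ∀ i ≤ l, t i ∈ varSpan B s (Set.Ico (m i) (m (i + 1)))

/-- `t` is an infinite extracted subsequence of `s` (with alphabets `B`). -/
def Extracted (B : ℕ → Set α) (s t : ℕ → List (Option α)) : Prop :=
  ∀ l : ℕ, ExtractedFin B s t l

/-- `E` is large in `s` (with alphabets `B`): `E` meets the constant span of
every infinite extracted subsequence of `s`. -/
def IsLarge (B : ℕ → Set α) (E : Set (List α)) (s : ℕ → List (Option α)) : Prop :=
  ∀ w : ℕ → List (Option α), Extracted B s w →
    (E ∩ constSpan B w Set.univ).Nonempty

/-- `E_F = {z ∈ W(S) : w ++ z ∈ E for every w ∈ F}`. -/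
def wordQuot (S : Set α) (E F : Set (List α)) : Set (List α) :=
  { z | z ∈ WordsOver S ∧ ∀ w ∈ F, w ++ z ∈ E }

end HJ

/-! If no `n₀` works, one builds blocks `t j` of `s` one after the other so that no word of `E`
has the form `p (t j)(a)` with `p` a constant word of the earlier blocks. Failure at a large index
gives a tail `z` that no variable word of the preceding blocks completes; Hales–Jewett applied to
the finitely many prefixes `p` gives a variable word `u` over fresh blocks for which membership of
`p u(a) z` in `E` does not depend on `a`, and `t j = u z`. The constant span of `(t j)` then misses
`E`, contradicting largeness. -/

namespace HJ

variable {α : Type*}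

theorem substC_append (u v : List (Option α)) (a : α) :
    substC (u ++ v) a = substC u a ++ substC v a :=
  List.map_append

theorem substC_map_some (z : List α) (a : α) : substC (z.map some) a = z := by
  simp [substC]

theorem substC_substV (u : List (Option α)) (b : Option α) (a : α) :
    substC (substV u b) a = substC u (b.getD a) := by
  simp only [substC, substV, List.map_map]
  refine List.map_congr_left fun c _ => ?_
  cases c <;> cases b <;> rfl

theorem substV_none (u : List (Option α)) : substV u none = u := by
  simp only [substV]
  exact (List.map_congr_left fun c _ => by cases c <;> rfl).trans (List.map_id u)

theorem substV_some (u : List (Option α)) (a : α) :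
    substV u (some a) = (substC u a).map some := by
  simp only [substC, substV, List.map_map]
  exact List.map_congr_left fun c _ => by cases c <;> rfl

theorem substV_substV (u : List (Option α)) (b c : Option α) :
    substV (substV u b) c = substV u (b.elim c some) := by
  simp only [substV, List.map_map]
  exact List.map_congr_left fun d _ => by cases d <;> rfl

/-- Common generalisation of `constSpan` and `varSpan` (for a uniform alphabet), indexed by the
list of (index, substituted letter) pairs. It contains `[]` and need not contain the variable,
which makes it closed under concatenation of index-separated pieces. -/
def span (S : Set α) (s : ℕ → List (Option α)) (I : Set ℕ) : Set (List (Option α)) :=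
  { w | ∃ L : List (ℕ × Option α), L.Pairwise (fun p q => p.1 < q.1) ∧
      (∀ p ∈ L, p.1 ∈ I ∧ ∀ a ∈ p.2, a ∈ S) ∧
      w = (L.map fun p => substV (s p.1) p.2).flatten }

variable {S : Set α} {s t : ℕ → List (Option α)} {I J : Set ℕ}

theorem span_mono (h : I ⊆ J) : span S s I ⊆ span S s J := by
  rintro w ⟨L, hL, hLI, rfl⟩
  exact ⟨L, hL, fun p hp => ⟨h (hLI p hp).1, (hLI p hp).2⟩, rfl⟩

theorem nil_mem_span : [] ∈ span S s I :=
  ⟨[], List.Pairwise.nil, by simp, rfl⟩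

theorem append_mem_span {u v : List (Option α)} (hu : u ∈ span S s I) (hv : v ∈ span S s J)
    (hIJ : ∀ i ∈ I, ∀ j ∈ J, i < j) : u ++ v ∈ span S s (I ∪ J) := by
  obtain ⟨L₁, hL₁, hL₁I, rfl⟩ := hu
  obtain ⟨L₂, hL₂, hL₂J, rfl⟩ := hv
  refine ⟨L₁ ++ L₂, List.pairwise_append.2 ⟨hL₁, hL₂, fun p hp q hq =>
    hIJ _ (hL₁I p hp).1 _ (hL₂J q hq).1⟩, ?_, by simp⟩
  intro p hp
  rcases List.mem_append.1 hp with hp | hp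
  · exact ⟨Or.inl (hL₁I p hp).1, (hL₁I p hp).2⟩
  · exact ⟨Or.inr (hL₂J p hp).1, (hL₂J p hp).2⟩

theorem substV_mem_span {u : List (Option α)} (hu : u ∈ span S s I) {b : Option α}
    (hb : ∀ a ∈ b, a ∈ S) : substV u b ∈ span S s I := by
  obtain ⟨L, hL, hLI, rfl⟩ := hu
  refine ⟨L.map fun p => (p.1, p.2.elim b some), List.pairwise_map.2 hL, ?_, ?_⟩
  · simp only [List.mem_map]
    rintro _ ⟨p, hp, rfl⟩
    refine ⟨(hLI p hp).1, fun a ha => ?_⟩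
    cases hp2 : p.2 with
    | none => exact hb a (by simpa [hp2] using ha)
    | some c => exact (hLI p hp).2 a (by simpa [hp2] using ha)
  · simp only [substV, List.map_flatten, List.map_map]
    congr 1
    exact List.map_congr_left fun p _ => substV_substV _ _ _

theorem ofFn_mem_span {n : ℕ} {l : Fin n → ℕ} {b : Fin n → Option α} (hl : StrictMono l)
    (hlI : ∀ i, l i ∈ I) (hb : ∀ i, ∀ a ∈ b i, a ∈ S) :
    (List.ofFn fun i => substV (s (l i)) (b i)).flatten ∈ span S s I := by
  refine ⟨List.ofFn fun i => (l i, b i), List.pairwise_ofFn.2 fun i j hij => hl hij, ?_, ?_⟩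
  · rintro _ hp
    obtain ⟨i, rfl⟩ := List.mem_ofFn.1 hp
    exact ⟨hlI i, hb i⟩
  · rw [List.map_ofFn]
    rfl

theorem mem_span_of_mem_varSpan {w : List (Option α)} (hw : w ∈ varSpan (fun _ => S) s I) :
    w ∈ span S s I := by
  obtain ⟨n, l, b, hl, hlI, hb, -, rfl⟩ := hw
  exact ofFn_mem_span hl hlI fun i a ha => hb i a ha

theorem map_some_mem_span_of_mem_constSpan {z : List α} (hz : z ∈ constSpan (fun _ => S) s I) :
    z.map some ∈ span S s I := by
  obtain ⟨n, l, a, hl, hlI, ha, rfl⟩ := hz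
  rw [List.map_flatten, List.map_ofFn]
  simpa only [Function.comp_def, substV_some] using
    ofFn_mem_span (s := s) (b := fun i => some (a i)) hl hlI fun i c hc =>
      Option.some_injective _ hc ▸ ha i

theorem mem_varSpan_of_mem_span {w : List (Option α)} (hw : w ∈ span S s I) (hnone : none ∈ w) :
    w ∈ varSpan (fun _ => S) s I := by
  obtain ⟨L, hL, hLI, rfl⟩ := hw
  cases L with
  | nil => simp at hnone
  | cons q L =>
    refine ⟨L.length, fun i => ((q :: L).get i).1, fun i => ((q :: L).get i).2,
      fun i j hij => List.pairwise_iff_get.1 hL i j hij, fun i => (hLI _ (List.get_mem _ _)).1,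
      fun i a ha => (hLI _ (List.get_mem _ _)).2 a ha, hnone, ?_⟩
    conv_lhs => rw [← List.ofFn_get (q :: L), List.map_ofFn]
    rfl

theorem span_Ico_subset_of_mem_span_Ico {m : ℕ → ℕ} (hm : Monotone m)
    (ht : ∀ i, t i ∈ span S s (Set.Ico (m i) (m (i + 1)))) (j k : ℕ) :
    span S t (Set.Ico j k) ⊆ span S s (Set.Ico (m j) (m k)) := by
  rintro _ ⟨L, hL, hLI, rfl⟩
  induction L generalizing j with
  | nil => exact nil_mem_span
  | cons q L ih =>
    obtain ⟨hqL, hL⟩ := List.pairwise_cons.1 hL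
    obtain ⟨⟨hjq, hqk⟩, hq⟩ := hLI q List.mem_cons_self
    have hhead := substV_mem_span (ht q.1) hq
    have htail := ih (q.1 + 1) hL fun p hp =>
      ⟨⟨hqL p hp, (hLI p (List.mem_cons_of_mem q hp)).1.2⟩, (hLI p (List.mem_cons_of_mem q hp)).2⟩
    refine span_mono ?_ (append_mem_span hhead htail fun x hx y hy => hx.2.trans_le hy.1)
    rintro x (hx | hx)
    · exact ⟨(hm hjq).trans hx.1, hx.2.trans_le (hm hqk)⟩
    · exact ⟨(hm (hjq.trans (Nat.le_succ _))).trans hx.1, hx.2⟩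

theorem finite_span (hS : S.Finite) (hI : I.Finite) : (span S s I).Finite := by
  set T : Set (ℕ × Option α) := I ×ˢ {o | ∀ a ∈ o, a ∈ S}
  have hT : T.Finite := hI.prod <| ((hS.image some).insert none).subset fun o ho => by
    cases o with
    | none => exact Set.mem_insert _ _
    | some a => exact Set.mem_insert_of_mem _ ⟨a, ho a rfl, rfl⟩
  have := hT.to_subtype
  have := Fintype.ofFinite T
  refine ((List.finite_length_le T (Fintype.card T)).image
    fun L => (L.map fun p => substV (s p.1.1) p.1.2).flatten).subset ?_
  rintro _ ⟨L, hL, hLI, rfl⟩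
  lift L to List T using fun p hp => hLI p hp
  refine ⟨L, List.Nodup.length_le_card ?_, by rw [List.map_map]; rfl⟩
  exact (List.pairwise_map.1 hL).imp fun hpq => ne_of_apply_ne (fun p : T => p.1.1) hpq.ne

theorem exists_eq_append_substC_of_mem_constSpan {y : List α}
    (hy : y ∈ constSpan (fun _ => S) t I) :
    ∃ k p, ∃ a ∈ S, p.map some ∈ span S t (Set.Iio k) ∧ y = p ++ substC (t k) a := by
  obtain ⟨n, l, a, hl, -, ha, rfl⟩ := hy
  refine ⟨l (Fin.last n), _, a (Fin.last n), ha _, ?_, by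
    rw [List.ofFn_succ', List.concat_eq_append, List.flatten_append, List.flatten_singleton]⟩
  rw [List.map_flatten, List.map_ofFn]
  simpa only [Function.comp_def, substV_some] using
    ofFn_mem_span (s := t) (I := Set.Iio (l (Fin.last n))) (l := fun i => l i.castSucc)
      (b := fun i => some (a i.castSucc)) (hl.comp Fin.strictMono_castSucc)
      (fun i => hl (Fin.castSucc_lt_last i)) fun i c hc => Option.some_injective _ hc ▸ ha _

theorem exists_mem_constSpan_Ioo_of_mem_constSpan_Ioi {B : ℕ → Set α} {z : List α} {N : ℕ}
    (hz : z ∈ constSpan B s (Set.Ioi N)) : ∃ M > N, z ∈ constSpan B s (Set.Ioo N M) := by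
  obtain ⟨n, l, a, hl, hlI, ha, rfl⟩ := hz
  exact ⟨l (Fin.last n) + 1, (hlI _).trans (Nat.lt_succ_self _), n, l, a, hl,
    fun i => ⟨hlI i, Nat.lt_succ_of_le (hl.monotone (Fin.le_last i))⟩, ha, rfl⟩

/-- The Hales–Jewett theorem, read in the blocks `s M, …, s (M + n - 1)`. -/
theorem exists_mem_varSpan_substC_color_eq (hS : S.Finite) (hs : ∀ n, none ∈ s n)
    (κ : Type*) [Finite κ] (M : ℕ) :
    ∃ n, ∀ C : List α → κ, ∃ w ∈ varSpan (fun _ => S) s (Set.Ico M (M + n)),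
      ∀ a ∈ S, ∀ b ∈ S, C (substC w a) = C (substC w b) := by
  have := hS.to_subtype
  obtain ⟨n, hn⟩ := Combinatorics.Subspace.exists_mono_in_high_dimension_fin S κ Unit
  refine ⟨n, fun C => ?_⟩
  obtain ⟨l, c, hc⟩ := hn fun x => C (List.ofFn fun i => substC (s (M + i)) (x i)).flatten
  set b : Fin n → Option α := fun i =>
    (l.idxFun i).elim (fun a : S => some (a : α)) fun _ => none
  set w := (List.ofFn fun i => substV (s (M + i)) (b i)).flatten
  have hw : w ∈ span S s (Set.Ico M (M + n)) :=
    ofFn_mem_span (fun i j hij => Nat.add_lt_add_left hij M)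
      (fun i => ⟨Nat.le_add_right _ _, Nat.add_lt_add_left i.isLt M⟩) fun i a ha => by
        cases h : l.idxFun i with
        | inl x => simp only [b, h, Sum.elim_inl, Option.mem_some_iff] at ha; exact ha ▸ x.2
        | inr => simp [b, h] at ha
  have hnone : none ∈ w := by
    obtain ⟨i, hi⟩ := l.proper ()
    exact List.mem_flatten.2 ⟨_, List.mem_ofFn.2 ⟨i, rfl⟩, by simp [b, hi, substV_none, hs]⟩
  have hsubst (a : α) (ha : a ∈ S) :
      substC w a = (List.ofFn fun i => substC (s (M + i)) (l (fun _ => ⟨a, ha⟩) i)).flatten := by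
    rw [substC, List.map_flatten, List.map_ofFn]
    congr 2; funext i
    show substC (substV _ (b i)) a = _
    cases h : l.idxFun i <;> simp [b, h, substC_substV, Combinatorics.Subspace.coe_apply]
  exact ⟨w, mem_varSpan_of_mem_span hw hnone, fun a ha a' ha' => by
    rw [hsubst a ha, hsubst a' ha']
    exact (hc _).trans (hc _).symm⟩

/-- The failure at `M + n` gives a tail `z` that no variable word `u` over the `n` blocks after
`M` completes; Hales–Jewett chooses `u` so that, for each of the finitely many prefixes `p`,
whether `p u(a) z ∈ E` does not depend on the letter `a`. -/
theorem exists_block_forall_append_substC_notMem {E : Set (List α)} (hS : S.Finite)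
    (hs : ∀ n, none ∈ s n)
    (hfail : ∀ n₀, ∃ z ∈ constSpan (fun _ => S) s (Set.Ioi n₀),
      ∀ w ∈ varSpan (fun _ => S) s (Set.Iic n₀), ∃ a ∈ S, substC w a ++ z ∉ E) (M : ℕ) :
    ∃ t, ∃ M' > M, t ∈ varSpan (fun _ => S) s (Set.Ico M M') ∧
      ∀ p : List α, p.map some ∈ span S s (Set.Iio M) → ∀ a ∈ S, p ++ substC t a ∉ E := by
  set P := {p : List α | p.map some ∈ span S s (Set.Iio M)}
  have : Finite P := ((finite_span hS (Set.finite_Iio M)).preimage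
    (List.map_injective_iff.2 (Option.some_injective α)).injOn).to_subtype
  obtain ⟨n, hn⟩ := exists_mem_varSpan_substC_color_eq hS hs (P → Prop) M
  obtain ⟨z, hz, hzE⟩ := hfail (M + n)
  obtain ⟨M', hM', hz'⟩ := exists_mem_constSpan_Ioo_of_mem_constSpan_Ioi hz
  obtain ⟨u, hu, huE⟩ := hn fun v p => p.1 ++ v ++ z ∈ E
  have hunone : none ∈ u := by
    obtain ⟨_, _, _, _, _, _, h, _⟩ := hu
    exact h
  refine ⟨u ++ z.map some, M', by omega, ?_, fun p hp a ha => ?_⟩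
  · refine mem_varSpan_of_mem_span (span_mono ?_ (append_mem_span (mem_span_of_mem_varSpan hu)
      (map_some_mem_span_of_mem_constSpan hz') fun i hi j hj => hi.2.trans hj.1))
      (List.mem_append_left _ hunone)
    rintro i (hi | hi)
    · exact ⟨hi.1, hi.2.trans hM'⟩
    · exact ⟨(Nat.le_add_right M n).trans hi.1.le, hi.2⟩
  · have hpu : p.map some ++ u ∈ varSpan (fun _ => S) s (Set.Iic (M + n)) := by
      refine mem_varSpan_of_mem_span (span_mono ?_ (append_mem_span hp (mem_span_of_mem_varSpan hu)
        fun i hi j hj => hi.trans_le hj.1)) (List.mem_append_right _ hunone)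
      rintro i (hi | hi)
      · exact (Set.mem_Iio.1 hi).le.trans (Nat.le_add_right _ _)
      · exact hi.2.le
    obtain ⟨a', ha', hout⟩ := hzE _ hpu
    rw [substC_append, substC_map_some] at hout
    rw [substC_append, substC_map_some, ← List.append_assoc, congrFun (huE a ha a' ha') ⟨p, hp⟩]
    exact hout

end HJ

open HJ in
theorem stmt6_general {α : Type*} (A : Finset α)
    (E : Set (List α))
    (s : ℕ → List (Option α)) (hs : ∀ n, IsVarWord (A : Set α) (s n))
    (hlarge : IsLarge (fun _ => (A : Set α)) E s) :
    ∃ n₀ : ℕ, ∀ z ∈ constSpan (fun _ => (A : Set α)) s (Set.Ioi n₀),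
      ∃ w ∈ varSpan (fun _ => (A : Set α)) s (Set.Iic n₀),
        ∀ a ∈ A, substC w a ++ z ∈ E := by
  by_contra! hfail
  choose T N hN hT hTE using
    exists_block_forall_append_substC_notMem A.finite_toSet (fun n => (hs n).2) hfail
  set m : ℕ → ℕ := fun j => N^[j] 0
  have hm_succ (j : ℕ) : m (j + 1) = N (m j) := Function.iterate_succ_apply' N j 0
  have hm : StrictMono m := strictMono_nat_of_lt_succ fun j => hm_succ j ▸ hN (m j)
  have ht (j : ℕ) : T (m j) ∈ varSpan (fun _ => (A : Set α)) s (Set.Ico (m j) (m (j + 1))) :=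
    hm_succ j ▸ hT (m j)
  have hext : Extracted (fun _ => (A : Set α)) s fun j => T (m j) :=
    fun _ => Exists.intro m ⟨rfl, hm, fun i _ => ht i⟩
  obtain ⟨y, hyE, hy⟩ := hlarge _ hext
  obtain ⟨k, p, a, ha, hp, rfl⟩ := exists_eq_append_substC_of_mem_constSpan hy
  have hps : p.map some ∈ span (A : Set α) s (Set.Iio (m k)) :=
    span_mono (fun i hi => hi.2) <| span_Ico_subset_of_mem_span_Ico hm.monotone
      (fun j => mem_span_of_mem_varSpan (ht j)) 0 k <|
      span_mono (J := Set.Ico 0 k) (fun i hi => ⟨i.zero_le, hi⟩) hp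
  exact hTE _ p hps a ha hyE

open HJ in
/-- Claim 1 of Lemma 2.10: a uniform head for all tails. -/
theorem stmt6 {α : Type*} (A : Finset α) (hA : A.Nonempty)
    (E : Set (List α)) (hE : E ⊆ WordsOver (A : Set α))
    (s : ℕ → List (Option α)) (hs : ∀ n, IsVarWord (A : Set α) (s n))
    (hlarge : IsLarge (fun _ => (A : Set α)) E s) :
    ∃ n₀ : ℕ, ∀ z ∈ constSpan (fun _ => (A : Set α)) s (Set.Ioi n₀),
      ∃ w ∈ varSpan (fun _ => (A : Set α)) s (Set.Iic n₀),
        ∀ a ∈ A, substC w a ++ z ∈ E :=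
  stmt6_general A E s hs hlarge
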